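/- An undirected graph G contains a clique of size k if and only if the incidence-based directed graph G' (with edge-vertices pointing to their endpoints and to a shared sink s, plus k+2 fully interconnected copies of a fixed pattern graph F that every original vertex points into) contains a weakly connected set S of size C(k,2) + 1 with out-neighborhood of size at most k that avoids inducing F. Specifically, the forward direction: if C is a k-clique in G, then S = {s} ∪ {v_e : e ⊆ C} is weakly connected, has size C(k,2)+1, and out-neighborhood exactly C of size k. -/

import Mathlib

/-!
Every edge-vertex `v_e` points to the sink `s`, so `S` is a star around `s` and hence weakly
connected. The edge-vertices of `S` are the `C(k, 2)` edges of the clique `C`; since `k ≥ 2`,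
every vertex of `C` lies on one of them, and the only vertices outside `S` that edge-vertices
point to are endpoints, so `N⁺(S) = C`.
-/

/-- The directed graph `G'` of the F-free reduction: vertices are
`V(G) ⊕ edge-vertices ⊕ {s} ⊕ (k+2 copies of a pattern graph F)`. Each edge-vertex
points to its two endpoints and to `s`, each original vertex points into every copy of
`F`, distinct copies of `F` are fully interconnected in both directions, and each copy
carries the edges of `F`. -/
def ffRel {V FV : Type*} (G : SimpleGraph V) (k : ℕ) (FE : FV → FV → Prop) :
    (V ⊕ (G.edgeSet ⊕ (Unit ⊕ Fin (k + 2) × FV))) →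
    (V ⊕ (G.edgeSet ⊕ (Unit ⊕ Fin (k + 2) × FV))) → Prop
  | Sum.inr (Sum.inl e), Sum.inl a => a ∈ (e : Sym2 V)
  | Sum.inr (Sum.inl _), Sum.inr (Sum.inr (Sum.inl _)) => True
  | Sum.inl _, Sum.inr (Sum.inr (Sum.inr _)) => True
  | Sum.inr (Sum.inr (Sum.inr (i, f))), Sum.inr (Sum.inr (Sum.inr (j, g))) =>
      i ≠ j ∨ (i = j ∧ FE f g)
  | _, _ => False

namespace SimpleGraph

variable {V : Type*} {G : SimpleGraph V}

theorem IsClique.image_val_setOf_edges_within [DecidableEq V] {C : Finset V}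
    (hC : G.IsClique (C : Set V)) :
    Subtype.val '' {e : G.edgeSet | ∀ v ∈ (e : Sym2 V), v ∈ C} =
      ↑(C.offDiag.image Sym2.mk.uncurry) := by
  ext z
  induction z using Sym2.ind with
  | _ a b =>
    simp only [Set.mem_image, Set.mem_ofPred_eq, Subtype.exists, exists_and_left, exists_prop,
      exists_eq_right_right, Sym2.mem_iff, forall_eq_or_imp, forall_eq, mem_edgeSet,
      Finset.coe_image, Finset.coe_offDiag, Set.mem_offDiag, SetLike.mem_coe, ne_eq,
      Prod.exists, Function.uncurry_apply_pair, Sym2.eq, Sym2.rel_iff', Prod.mk.injEq,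
      Prod.swap_prod_mk]
    constructor
    · rintro ⟨⟨ha, hb⟩, hab⟩
      exact ⟨a, b, ⟨ha, hb, hab.ne⟩, Or.inl ⟨rfl, rfl⟩⟩
    · rintro ⟨x, y, ⟨hx, hy, hxy⟩, ⟨rfl, rfl⟩ | ⟨rfl, rfl⟩⟩
      · exact ⟨⟨hx, hy⟩, hC hx hy hxy⟩
      · exact ⟨⟨hy, hx⟩, hC hy hx (Ne.symm hxy)⟩

theorem finite_setOf_edges_within (G : SimpleGraph V) (C : Finset V) :
    {e : G.edgeSet | ∀ v ∈ (e : Sym2 V), v ∈ C}.Finite :=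
  Set.Finite.of_finite_image
    (C.sym2.finite_toSet.subset fun _ ⟨_, he, hz⟩ => hz ▸ Finset.mem_sym2_iff.mpr he)
    Subtype.val_injective.injOn

theorem IsClique.ncard_setOf_edges_within [DecidableEq V] {C : Finset V}
    (hC : G.IsClique (C : Set V)) :
    {e : G.edgeSet | ∀ v ∈ (e : Sym2 V), v ∈ C}.ncard = C.card.choose 2 := by
  rw [← Set.ncard_image_of_injective _ Subtype.val_injective, hC.image_val_setOf_edges_within,
    Set.ncard_coe_finset, Sym2.card_image_offDiag]

theorem IsClique.exists_edge_within {C : Finset V} (hC : G.IsClique (C : Set V))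
    (hC₁ : 1 < C.card) {a : V} (ha : a ∈ C) :
    ∃ e : G.edgeSet, a ∈ (e : Sym2 V) ∧ ∀ v ∈ (e : Sym2 V), v ∈ C := by
  obtain ⟨b, hb, hba⟩ := C.exists_mem_ne hC₁ a
  refine ⟨⟨s(a, b), hC ha hb hba.symm⟩, Sym2.mem_mk_left a b, fun v hv => ?_⟩
  rcases Sym2.mem_iff.mp hv with rfl | rfl
  exacts [ha, hb]

end SimpleGraph

section Relation

variable {α : Type*}

def outNeighborhood (R : α → α → Prop) (S : Set α) : Set α :=
  {v | v ∉ S ∧ ∃ s ∈ S, R s v}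

def IsWeaklyConnectedOn (R : α → α → Prop) (S : Set α) : Prop :=
  ∀ a ∈ S, ∀ b ∈ S,
    Relation.ReflTransGen (fun x y => x ∈ S ∧ y ∈ S ∧ (R x y ∨ R y x)) a b

theorem isWeaklyConnectedOn_of_forall_rel_hub {R : α → α → Prop} {S : Set α} {t : α}
    (ht : t ∈ S) (hR : ∀ x ∈ S, x ≠ t → R x t) : IsWeaklyConnectedOn R S := by
  have toHub : ∀ x ∈ S, Relation.ReflTransGen
      (fun x y => x ∈ S ∧ y ∈ S ∧ (R x y ∨ R y x)) x t := by
    intro x hx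
    by_cases hxt : x = t
    · exact hxt ▸ .refl
    · exact .single ⟨hx, ht, .inl (hR x hx hxt)⟩
  have fromHub : ∀ x ∈ S, Relation.ReflTransGen
      (fun x y => x ∈ S ∧ y ∈ S ∧ (R x y ∨ R y x)) t x := by
    intro x hx
    by_cases hxt : x = t
    · exact hxt ▸ .refl
    · exact .single ⟨ht, hx, .inr (hR x hx hxt)⟩
  exact fun a ha b hb => (toHub a ha).trans (fromHub b hb)

end Relation

section CliqueWitness

variable {V : Type*} (G : SimpleGraph V) (k : ℕ)

/-- The set `S = {s} ∪ {v_e : e ⊆ C}` of the reduction, the sink `s` being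
`Sum.inr (Sum.inr (Sum.inl ()))`. -/
def cliqueWitness (FV : Type*) (C : Finset V) :
    Set (V ⊕ (G.edgeSet ⊕ (Unit ⊕ Fin (k + 2) × FV))) :=
  insert (Sum.inr (Sum.inr (Sum.inl ())))
    {x | ∃ e : G.edgeSet, x = Sum.inr (Sum.inl e) ∧ ∀ v ∈ (e : Sym2 V), v ∈ C}

theorem ncard_cliqueWitness [DecidableEq V] (FV : Type*) {C : Finset V}
    (hC : G.IsClique (C : Set V)) : (cliqueWitness G k FV C).ncard = C.card.choose 2 + 1 := by
  have hImage : {x : V ⊕ (G.edgeSet ⊕ (Unit ⊕ Fin (k + 2) × FV)) |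
      ∃ e : G.edgeSet, x = Sum.inr (Sum.inl e) ∧ ∀ v ∈ (e : Sym2 V), v ∈ C} =
      (Sum.inr ∘ Sum.inl) '' {e : G.edgeSet | ∀ v ∈ (e : Sym2 V), v ∈ C} := by
    ext x
    constructor
    · rintro ⟨e, rfl, he⟩
      exact ⟨e, he, rfl⟩
    · rintro ⟨e, he, rfl⟩
      exact ⟨e, rfl, he⟩
  have hInj : Function.Injective (Sum.inr ∘ Sum.inl :
      G.edgeSet → V ⊕ (G.edgeSet ⊕ (Unit ⊕ Fin (k + 2) × FV))) :=
    Sum.inr_injective.comp Sum.inl_injective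
  rw [cliqueWitness, hImage, Set.ncard_insert_of_notMem (by simp)
    ((G.finite_setOf_edges_within C).image _), Set.ncard_image_of_injective _ hInj,
    hC.ncard_setOf_edges_within]

theorem outNeighborhood_cliqueWitness {FV : Type*} (FE : FV → FV → Prop) {C : Finset V}
    (hC : G.IsClique (C : Set V)) (hC₁ : 1 < C.card) :
    outNeighborhood (ffRel G k FE) (cliqueWitness G k FV C) = Sum.inl '' (C : Set V) := by
  ext v
  constructor
  · rintro ⟨hv, s, rfl | ⟨e, rfl, he⟩, hrel⟩
    · rcases v with a | e' | u | ⟨i, f⟩ <;> exact hrel.elim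
    · rcases v with a | e' | u | ⟨i, f⟩
      · exact ⟨a, he a hrel, rfl⟩
      · exact hrel.elim
      · exact absurd (Set.mem_insert _ _) hv
      · exact hrel.elim
  · rintro ⟨a, ha, rfl⟩
    obtain ⟨e, hae, he⟩ := hC.exists_edge_within hC₁ ha
    refine ⟨by simp [cliqueWitness], Sum.inr (Sum.inl e), .inr ⟨e, rfl, he⟩, hae⟩

theorem isWeaklyConnectedOn_cliqueWitness {FV : Type*} (FE : FV → FV → Prop) (C : Finset V) :
    IsWeaklyConnectedOn (ffRel G k FE) (cliqueWitness G k FV C) := by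
  refine isWeaklyConnectedOn_of_forall_rel_hub (Set.mem_insert _ _) ?_
  rintro x (rfl | ⟨e, rfl, -⟩) hx
  exacts [absurd rfl hx, trivial]

end CliqueWitness

theorem stmt_12_general {V FV : Type*} [DecidableEq V] (G : SimpleGraph V)
    (FE : FV → FV → Prop) (k : ℕ) (hk : 2 ≤ k)
    (C : Finset V) (hCcard : C.card = k) (hCclq : G.IsClique (↑C : Set V)) :
    (insert (Sum.inr (Sum.inr (Sum.inl ())) : V ⊕ (G.edgeSet ⊕ (Unit ⊕ Fin (k + 2) × FV)))
        {x | ∃ e : G.edgeSet, x = Sum.inr (Sum.inl e) ∧ ∀ v ∈ (e : Sym2 V), v ∈ C}).ncard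
      = k.choose 2 + 1 ∧
    {v | v ∉ insert (Sum.inr (Sum.inr (Sum.inl ())) :
          V ⊕ (G.edgeSet ⊕ (Unit ⊕ Fin (k + 2) × FV)))
        {x | ∃ e : G.edgeSet, x = Sum.inr (Sum.inl e) ∧ ∀ v ∈ (e : Sym2 V), v ∈ C} ∧
      ∃ s ∈ insert (Sum.inr (Sum.inr (Sum.inl ())) :
          V ⊕ (G.edgeSet ⊕ (Unit ⊕ Fin (k + 2) × FV)))
        {x | ∃ e : G.edgeSet, x = Sum.inr (Sum.inl e) ∧ ∀ v ∈ (e : Sym2 V), v ∈ C},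
      ffRel G k FE s v} = Sum.inl '' (↑C : Set V) ∧
    {v | v ∉ insert (Sum.inr (Sum.inr (Sum.inl ())) :
          V ⊕ (G.edgeSet ⊕ (Unit ⊕ Fin (k + 2) × FV)))
        {x | ∃ e : G.edgeSet, x = Sum.inr (Sum.inl e) ∧ ∀ v ∈ (e : Sym2 V), v ∈ C} ∧
      ∃ s ∈ insert (Sum.inr (Sum.inr (Sum.inl ())) :
          V ⊕ (G.edgeSet ⊕ (Unit ⊕ Fin (k + 2) × FV)))
        {x | ∃ e : G.edgeSet, x = Sum.inr (Sum.inl e) ∧ ∀ v ∈ (e : Sym2 V), v ∈ C},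
      ffRel G k FE s v}.ncard = k ∧
    ∀ a ∈ insert (Sum.inr (Sum.inr (Sum.inl ())) :
          V ⊕ (G.edgeSet ⊕ (Unit ⊕ Fin (k + 2) × FV)))
        {x | ∃ e : G.edgeSet, x = Sum.inr (Sum.inl e) ∧ ∀ v ∈ (e : Sym2 V), v ∈ C},
      ∀ b ∈ insert (Sum.inr (Sum.inr (Sum.inl ())) :
          V ⊕ (G.edgeSet ⊕ (Unit ⊕ Fin (k + 2) × FV)))
        {x | ∃ e : G.edgeSet, x = Sum.inr (Sum.inl e) ∧ ∀ v ∈ (e : Sym2 V), v ∈ C},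
      Relation.ReflTransGen (fun x y =>
        x ∈ insert (Sum.inr (Sum.inr (Sum.inl ())) :
              V ⊕ (G.edgeSet ⊕ (Unit ⊕ Fin (k + 2) × FV)))
            {x | ∃ e : G.edgeSet, x = Sum.inr (Sum.inl e) ∧ ∀ v ∈ (e : Sym2 V), v ∈ C} ∧
        y ∈ insert (Sum.inr (Sum.inr (Sum.inl ())) :
              V ⊕ (G.edgeSet ⊕ (Unit ⊕ Fin (k + 2) × FV)))
            {x | ∃ e : G.edgeSet, x = Sum.inr (Sum.inl e) ∧ ∀ v ∈ (e : Sym2 V), v ∈ C} ∧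
        (ffRel G k FE x y ∨ ffRel G k FE y x)) a b := by
  have hN := outNeighborhood_cliqueWitness G k FE hCclq (by omega)
  refine ⟨hCcard ▸ ncard_cliqueWitness G k FV hCclq, hN, ?_,
    isWeaklyConnectedOn_cliqueWitness G k FE C⟩
  change (outNeighborhood (ffRel G k FE) (cliqueWitness G k FV C)).ncard = k
  rw [hN, Set.ncard_image_of_injective _ Sum.inl_injective, Set.ncard_coe_finset, hCcard]

/-- Forward direction of the hardness reduction: for a `k`-clique `C` of `G`, the set
`S = {s} ∪ {v_e : e ⊆ C}` has size `C(k,2) + 1`, is weakly connected in `G'`, and its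
out-neighborhood is exactly `C`, of size `k`. -/
theorem stmt_12 {V FV : Type*} [Fintype V] [DecidableEq V] (G : SimpleGraph V)
    (FE : FV → FV → Prop) (k : ℕ) (hk : 2 ≤ k)
    (C : Finset V) (hCcard : C.card = k) (hCclq : G.IsClique (↑C : Set V)) :
    (insert (Sum.inr (Sum.inr (Sum.inl ())) : V ⊕ (G.edgeSet ⊕ (Unit ⊕ Fin (k + 2) × FV)))
        {x | ∃ e : G.edgeSet, x = Sum.inr (Sum.inl e) ∧ ∀ v ∈ (e : Sym2 V), v ∈ C}).ncard
      = k.choose 2 + 1 ∧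
    {v | v ∉ insert (Sum.inr (Sum.inr (Sum.inl ())) :
          V ⊕ (G.edgeSet ⊕ (Unit ⊕ Fin (k + 2) × FV)))
        {x | ∃ e : G.edgeSet, x = Sum.inr (Sum.inl e) ∧ ∀ v ∈ (e : Sym2 V), v ∈ C} ∧
      ∃ s ∈ insert (Sum.inr (Sum.inr (Sum.inl ())) :
          V ⊕ (G.edgeSet ⊕ (Unit ⊕ Fin (k + 2) × FV)))
        {x | ∃ e : G.edgeSet, x = Sum.inr (Sum.inl e) ∧ ∀ v ∈ (e : Sym2 V), v ∈ C},
      ffRel G k FE s v} = Sum.inl '' (↑C : Set V) ∧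
    {v | v ∉ insert (Sum.inr (Sum.inr (Sum.inl ())) :
          V ⊕ (G.edgeSet ⊕ (Unit ⊕ Fin (k + 2) × FV)))
        {x | ∃ e : G.edgeSet, x = Sum.inr (Sum.inl e) ∧ ∀ v ∈ (e : Sym2 V), v ∈ C} ∧
      ∃ s ∈ insert (Sum.inr (Sum.inr (Sum.inl ())) :
          V ⊕ (G.edgeSet ⊕ (Unit ⊕ Fin (k + 2) × FV)))
        {x | ∃ e : G.edgeSet, x = Sum.inr (Sum.inl e) ∧ ∀ v ∈ (e : Sym2 V), v ∈ C},
      ffRel G k FE s v}.ncard = k ∧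
    ∀ a ∈ insert (Sum.inr (Sum.inr (Sum.inl ())) :
          V ⊕ (G.edgeSet ⊕ (Unit ⊕ Fin (k + 2) × FV)))
        {x | ∃ e : G.edgeSet, x = Sum.inr (Sum.inl e) ∧ ∀ v ∈ (e : Sym2 V), v ∈ C},
      ∀ b ∈ insert (Sum.inr (Sum.inr (Sum.inl ())) :
          V ⊕ (G.edgeSet ⊕ (Unit ⊕ Fin (k + 2) × FV)))
        {x | ∃ e : G.edgeSet, x = Sum.inr (Sum.inl e) ∧ ∀ v ∈ (e : Sym2 V), v ∈ C},
      Relation.ReflTransGen (fun x y =>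
        x ∈ insert (Sum.inr (Sum.inr (Sum.inl ())) :
              V ⊕ (G.edgeSet ⊕ (Unit ⊕ Fin (k + 2) × FV)))
            {x | ∃ e : G.edgeSet, x = Sum.inr (Sum.inl e) ∧ ∀ v ∈ (e : Sym2 V), v ∈ C} ∧
        y ∈ insert (Sum.inr (Sum.inr (Sum.inl ())) :
              V ⊕ (G.edgeSet ⊕ (Unit ⊕ Fin (k + 2) × FV)))
            {x | ∃ e : G.edgeSet, x = Sum.inr (Sum.inl e) ∧ ∀ v ∈ (e : Sym2 V), v ∈ C} ∧
        (ffRel G k FE x y ∨ ffRel G k FE y x)) a b :=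
  stmt_12_general G FE k hk C hCcard hCclq
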